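/- arXiv:1502.03142 — 3 statements merged into one kernel-verified Lean document; each statement's English description precedes it below -/
import Mathlib

section
/- For every a with 0 < a < 1, the characteristic equation λ = a(1 - e^{-λ}) has a unique nonzero real root κ, and κ < 0. -/
/-!
The function `g λ = λ - a (1 - e^{-λ})` is strictly convex and vanishes at `0`, so it has at most
one other zero. Since `g (log a) = log a - a + 1 < 0` and `g (-2/a) ≥ 2 > 0` (by
`e^t ≥ 1 + t + t²/2`), the intermediate value theorem gives a zero in `[-2/a, log a]`, and
`log a < 0`.
-/

open Real Set

section StrictConvex

variable {𝕜 : Type*} [Field 𝕜] [LinearOrder 𝕜] [IsStrictOrderedRing 𝕜] {s : Set 𝕜} {f : 𝕜 → 𝕜}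
  {x y z : 𝕜}

theorem StrictConvexOn.ne_of_lt_of_lt (hf : StrictConvexOn 𝕜 s f) (hx : x ∈ s) (hz : z ∈ s)
    (hxy : x < y) (hyz : y < z) (hfxy : f x = f y) : f y ≠ f z := by
  intro hfyz
  have hslope := hf.slope_strict_mono_adjacent hx hz hxy hyz
  rw [hfxy, hfyz, sub_self, zero_div, zero_div] at hslope
  exact lt_irrefl 0 hslope

theorem StrictConvexOn.eq_of_apply_eq (hf : StrictConvexOn 𝕜 s f) (hx : x ∈ s) (hy : y ∈ s)
    (hz : z ∈ s) (hxy : x ≠ y) (hxz : x ≠ z) (hfy : f y = f x) (hfz : f z = f x) : y = z := by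
  by_contra hyz
  wlog hlt : y < z generalizing y z
  · exact this hz hy hxz hxy hfz hfy (Ne.symm hyz) ((Ne.symm hyz).lt_of_le (not_lt.mp hlt))
  rcases lt_or_gt_of_ne hxy with hxy' | hyx
  · exact hf.ne_of_lt_of_lt hx hz hxy' hlt hfy.symm (hfy.trans hfz.symm)
  rcases lt_or_gt_of_ne hxz with hxz' | hzx
  · exact hf.ne_of_lt_of_lt hy hz hyx hxz' hfy hfz.symm
  · exact hf.ne_of_lt_of_lt hy hx hlt hzx (hfy.trans hfz.symm) hfz

end StrictConvex

noncomputable def characteristicFun (a x : ℝ) : ℝ := x - a * (1 - exp (-x))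

section characteristicFun

variable {a : ℝ}

theorem characteristicFun_eq_zero_iff {x : ℝ} :
    characteristicFun a x = 0 ↔ x = a * (1 - exp (-x)) :=
  sub_eq_zero

theorem characteristicFun_zero : characteristicFun a 0 = 0 := by
  simp [characteristicFun]

theorem continuous_characteristicFun : Continuous (characteristicFun a) := by
  unfold characteristicFun
  fun_prop

theorem strictConvexOn_characteristicFun (ha : 0 < a) :
    StrictConvexOn ℝ univ (characteristicFun a) := by
  refine ⟨convex_univ, fun x _ y _ hxy s t hs ht hst => ?_⟩
  have hexp := strictConvexOn_exp.2 (mem_univ (-x)) (mem_univ (-y)) (neg_injective.ne hxy) hs ht hst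
  simp only [smul_eq_mul, characteristicFun] at hexp ⊢
  rw [show -(s * x + t * y) = s * -x + t * -y by ring]
  obtain rfl : t = 1 - s := by linarith
  nlinarith [mul_lt_mul_of_pos_left hexp ha]

theorem characteristicFun_log_neg (ha0 : 0 < a) (ha1 : a < 1) :
    characteristicFun a (log a) < 0 := by
  have hlog : log a < a - 1 := log_lt_sub_one_of_pos ha0 ha1.ne
  have hexp : a * exp (-log a) = 1 := by rw [exp_neg, exp_log ha0, mul_inv_cancel₀ ha0.ne']
  simp only [characteristicFun, mul_sub, mul_one, hexp]
  linarith

theorem characteristicFun_neg_two_div_pos (ha : 0 < a) : 0 < characteristicFun a (-(2 / a)) := by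
  have hexp : a * (1 + 2 / a + (2 / a) ^ 2 / 2) ≤ a * exp (2 / a) :=
    mul_le_mul_of_nonneg_left (quadratic_le_exp_of_nonneg (by positivity)) ha.le
  have hexpand : a * (1 + 2 / a + (2 / a) ^ 2 / 2) = a + 2 + 2 / a := by field_simp
  simp only [characteristicFun, neg_neg, mul_sub, mul_one]
  linarith

theorem neg_two_div_le_log (ha : 0 < a) : -(2 / a) ≤ log a := by
  have hlog := one_sub_inv_le_log_of_pos ha
  have : -(2 / a) ≤ 1 - a⁻¹ := by
    rw [div_eq_mul_inv]
    nlinarith [inv_pos.mpr ha]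
  linarith

theorem exists_neg_characteristicFun_eq_zero (ha0 : 0 < a) (ha1 : a < 1) :
    ∃ κ < 0, characteristicFun a κ = 0 := by
  obtain ⟨κ, hκ, hzero⟩ := intermediate_value_Icc' (neg_two_div_le_log ha0)
    continuous_characteristicFun.continuousOn
    ⟨(characteristicFun_log_neg ha0 ha1).le, (characteristicFun_neg_two_div_pos ha0).le⟩
  exact ⟨κ, hκ.2.trans_lt (log_neg ha0 ha1), hzero⟩

end characteristicFun

/-- For `0 < a < 1`, the equation `λ = a(1 - e^{-λ})` has a unique nonzero real root `κ`,
and `κ < 0`. -/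
theorem stmt_3 (a : ℝ) (ha0 : 0 < a) (ha1 : a < 1) :
    ∃ κ : ℝ, κ < 0 ∧ κ = a * (1 - Real.exp (-κ)) ∧
      ∀ l : ℝ, l ≠ 0 → l = a * (1 - Real.exp (-l)) → l = κ := by
  obtain ⟨κ, hκ, hκroot⟩ := exists_neg_characteristicFun_eq_zero ha0 ha1
  refine ⟨κ, hκ, characteristicFun_eq_zero_iff.mp hκroot, fun l hl hlroot => ?_⟩
  have hlroot' : characteristicFun a l = 0 := characteristicFun_eq_zero_iff.mpr hlroot
  exact (strictConvexOn_characteristicFun ha0).eq_of_apply_eq (mem_univ 0) (mem_univ l)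
    (mem_univ κ) hl.symm hκ.ne' (hlroot'.trans characteristicFun_zero.symm)
    (hκroot.trans characteristicFun_zero.symm)
end

section
/- Let c > 0 and let h : V → ℝ be continuous on an open interval V containing 0 with h(z) = -c|z|z + o(|z|²) as z → 0. Then the zero solution of the scalar ODE z'(t) = h(z(t)) is locally asymptotically stable: there is δ > 0 such that every solution with |z(0)| < δ exists for all t ≥ 0, satisfies |z(t)| ≤ |z(0)| for all t ≥ 0, and z(t) → 0 as t → ∞. -/
/-! Near `0` the asymptotics of `h` give `x * h x ≤ -(c/2) |x|³`, so `z²` is a strict Lyapunov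
function. Where `x * h x < 0` the vector field points inwards on every circle `|x| = ρ`, and the
fencing theorem applied to `z²` against the constant `ρ²` shows that `|z|` never increases. While
`|z| ≥ r`, `z²` decreases at rate at least `c r³`, which cannot last forever; so `|z|` drops below
`r` at some time and stays there. -/

open Filter Topology Set

section ScalarODE

variable {F z : ℝ → ℝ} {ε : ℝ}

theorem hasDerivAt_sq_of_hasDerivAt {z' t : ℝ} (hz : HasDerivAt z z' t) :
    HasDerivAt (fun s => z s ^ 2) (2 * z t * z') t := by
  simpa [mul_comm, mul_left_comm] using hz.fun_pow 2

theorem abs_le_abs_of_mul_neg (hF : ∀ x, x ≠ 0 → |x| < ε → x * F x < 0) {a : ℝ}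
    (hz : ∀ t, a ≤ t → HasDerivAt z (F (z t)) t) (ha : |z a| < ε) {t : ℝ} (ht : a ≤ t) :
    |z t| ≤ |z a| := by
  have hsq x (hx : a ≤ x) := hasDerivAt_sq_of_hasDerivAt (hz x hx)
  have fence : ∀ ρ, |z a| < ρ → ρ < ε → |z t| ≤ ρ := by
    intro ρ haρ hρε
    have hρ : 0 < ρ := (abs_nonneg _).trans_lt haρ
    have hboundary : ∀ x ∈ Ico a t, z x ^ 2 = ρ ^ 2 → 2 * z x * F (z x) < 0 := by
      intro x hx hxρ
      have habs : |z x| = ρ := by rw [(sq_eq_sq_iff_abs_eq_abs _ _).1 hxρ, abs_of_pos hρ]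
      have := hF (z x) (abs_pos.1 (habs ▸ hρ)) (habs ▸ hρε)
      linarith
    have hsq_le := image_le_of_deriv_right_lt_deriv_boundary (B := fun _ => ρ ^ 2)
      (fun x hx => (hsq x hx.1).continuousAt.continuousWithinAt)
      (fun x hx => (hsq x hx.1).hasDerivWithinAt) (by rw [← sq_abs]; gcongr)
      (fun _ => hasDerivAt_const _ _) hboundary ⟨ht, le_rfl⟩
    exact abs_le_of_sq_le_sq hsq_le hρ.le
  refine le_of_forall_gt_imp_ge_of_dense fun ρ haρ => ?_
  rcases lt_or_ge ρ ε with hρε | hερ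
  · exact fence ρ haρ hρε
  · have := fence ((|z a| + ε) / 2) (by linarith) (by linarith)
    linarith

theorem antitoneOn_abs_of_mul_neg (hF : ∀ x, x ≠ 0 → |x| < ε → x * F x < 0)
    (hz : ∀ t, 0 ≤ t → HasDerivAt z (F (z t)) t) (h0 : |z 0| < ε) :
    AntitoneOn (fun t => |z t|) (Ici 0) := by
  intro s hs t ht hst
  exact abs_le_abs_of_mul_neg hF (fun u hu => hz u (le_trans hs hu))
    ((abs_le_abs_of_mul_neg hF hz h0 hs).trans_lt h0) hst

theorem not_forall_mul_le_neg {z' : ℝ → ℝ} {m : ℝ} (hm : 0 < m)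
    (hz : ∀ t, 0 ≤ t → HasDerivAt z (z' t) t) : ¬ ∀ t, 0 ≤ t → z t * z' t ≤ -m := by
  intro hdecay
  have hsq x (hx : 0 ≤ x) := hasDerivAt_sq_of_hasDerivAt (hz x hx)
  set T := (z 0 ^ 2 + 1) / (2 * m)
  have hT : 0 ≤ T := by positivity
  have hle := image_le_of_deriv_right_le_deriv_boundary (b := T)
    (B := fun t => z 0 ^ 2 - 2 * m * t) (B' := fun _ => -(2 * m))
    (fun x hx => (hsq x hx.1).continuousAt.continuousWithinAt)
    (fun x hx => (hsq x hx.1).hasDerivWithinAt) (by simp) (by fun_prop)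
    (fun x _ => by
      simpa using ((hasDerivAt_id x).const_mul (2 * m)).const_sub (z 0 ^ 2) |>.hasDerivWithinAt)
    (fun x hx => by linarith [hdecay x hx.1]) ⟨hT, le_rfl⟩
  have h2mT : 2 * m * T = z 0 ^ 2 + 1 := by simp only [T]; field_simp
  nlinarith [sq_nonneg (z T)]

theorem mul_neg_of_mul_le_neg_abs_pow {k : ℝ} (hk : 0 < k)
    (hF : ∀ x, |x| < ε → x * F x ≤ -k * |x| ^ 3) : ∀ x, x ≠ 0 → |x| < ε → x * F x < 0 :=
  fun x hx0 hx => (hF x hx).trans_lt <|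
    mul_neg_of_neg_of_pos (neg_neg_of_pos hk) (pow_pos (abs_pos.2 hx0) 3)

theorem tendsto_zero_of_mul_le_neg_abs_pow {k : ℝ} (hk : 0 < k)
    (hF : ∀ x, |x| < ε → x * F x ≤ -k * |x| ^ 3)
    (hz : ∀ t, 0 ≤ t → HasDerivAt z (F (z t)) t) (h0 : |z 0| < ε) :
    Tendsto z atTop (𝓝 0) := by
  have hanti := antitoneOn_abs_of_mul_neg (mul_neg_of_mul_le_neg_abs_pow hk hF) hz h0
  rw [Metric.tendsto_atTop]
  intro r hr
  obtain ⟨t₀, ht₀, hlt⟩ : ∃ t₀, 0 ≤ t₀ ∧ |z t₀| < r := by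
    by_contra! hfar
    refine not_forall_mul_le_neg (by positivity : 0 < k * r ^ 3) hz fun t ht => ?_
    calc z t * F (z t) ≤ -k * |z t| ^ 3 := hF _ ((hanti self_mem_Ici ht ht).trans_lt h0)
      _ ≤ -(k * r ^ 3) := by
        have := pow_le_pow_left₀ hr.le (hfar t ht) 3
        nlinarith
  refine ⟨t₀, fun t ht => ?_⟩
  rw [Real.dist_eq, sub_zero]
  exact (hanti ht₀ (ht₀.trans ht) ht).trans_lt hlt

end ScalarODE

theorem eventually_mul_le_neg_abs_pow_of_tendsto {c : ℝ} (hc : 0 < c) {h : ℝ → ℝ}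
    (hasym : Tendsto (fun z : ℝ => (h z + c * |z| * z) / z ^ 2) (𝓝[≠] 0) (𝓝 0)) :
    ∀ᶠ x in 𝓝 0, x * h x ≤ -(c / 2) * |x| ^ 3 := by
  have hsmall :=
    eventually_nhdsWithin_iff.1 (hasym.eventually (eventually_abs_sub_lt 0 (half_pos hc)))
  filter_upwards [hsmall] with x hx
  rcases eq_or_ne x 0 with rfl | hx0
  · simp
  have hrem : |h x + c * |x| * x| ≤ c / 2 * x ^ 2 := by
    have := hx hx0
    rw [sub_zero, abs_div, abs_of_nonneg (sq_nonneg x), div_lt_iff₀ (by positivity)] at this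
    exact this.le
  calc x * h x = x * (h x + c * |x| * x) - c * |x| * x ^ 2 := by ring
    _ ≤ |x| * (c / 2 * x ^ 2) - c * |x| * x ^ 2 := by
        refine sub_le_sub_right ?_ _
        calc x * (h x + c * |x| * x) ≤ |x| * |h x + c * |x| * x| :=
              (le_abs_self _).trans (abs_mul _ _).le
          _ ≤ |x| * (c / 2 * x ^ 2) := by gcongr
    _ = -(c / 2) * |x| ^ 3 := by rw [← sq_abs x]; ring

theorem stmt_6_general (c : ℝ) (hc : 0 < c) (h : ℝ → ℝ)
    (hasym : Tendsto (fun z : ℝ => (h z + c * |z| * z) / z ^ 2) (𝓝[≠] 0) (𝓝 0)) :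
    ∃ δ > 0, ∀ z : ℝ → ℝ,
      (∀ t : ℝ, 0 ≤ t → HasDerivAt z (h (z t)) t) → |z 0| < δ →
        (∀ t : ℝ, 0 ≤ t → |z t| ≤ |z 0|) ∧ Tendsto z atTop (𝓝 0) := by
  obtain ⟨δ, hδ, hball⟩ :=
    Metric.eventually_nhds_iff.1 (eventually_mul_le_neg_abs_pow_of_tendsto hc hasym)
  have hdecay : ∀ x, |x| < δ → x * h x ≤ -(c / 2) * |x| ^ 3 := fun x hx =>
    hball (by rwa [Real.dist_eq, sub_zero])
  refine ⟨δ, hδ, fun z hz hz0 => ⟨fun t ht => ?_, ?_⟩⟩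
  · exact abs_le_abs_of_mul_neg (mul_neg_of_mul_le_neg_abs_pow (half_pos hc) hdecay) hz hz0 ht
  · exact tendsto_zero_of_mul_le_neg_abs_pow (half_pos hc) hdecay hz hz0

/-- If `h` is continuous near `0`, `h(0) = 0`, and `h(z) = -c|z|z + o(|z|²)` as `z → 0` with
`c > 0`, then the zero solution of `z' = h(z)` is locally asymptotically stable. -/
theorem stmt_6 (c : ℝ) (hc : 0 < c) (V : Set ℝ) (hV : IsOpen V) (hV0 : (0 : ℝ) ∈ V)
    (h : ℝ → ℝ) (hcont : ContinuousOn h V) (h0 : h 0 = 0)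
    (hasym : Tendsto (fun z : ℝ => (h z + c * |z| * z) / z ^ 2) (𝓝[≠] 0) (𝓝 0)) :
    ∃ δ > 0, ∀ z : ℝ → ℝ,
      (∀ t : ℝ, 0 ≤ t → HasDerivAt z (h (z t)) t) → |z 0| < δ →
        (∀ t : ℝ, 0 ≤ t → |z t| ≤ |z 0|) ∧ Tendsto z atTop (𝓝 0) :=
  stmt_6_general c hc h hasym
end

section
/- Let c > 0 and h : ℝ → ℝ with h(z) = c|z|z + o(|z|²) as z → 0 (positive leading coefficient). Then the zero solution of z' = h(z) is unstable: for every δ > 0 there is an initial condition with |z(0)| < δ whose solution leaves a fixed neighborhood of 0 in finite time. -/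
/-!
Since `h(z) = c z² + o(z²)` for `z > 0`, `h` is positive on some interval `(0, r)`. On such an
interval the equation separates: if `F` is a primitive of `1 / h`, then `z = F⁻¹` solves
`z' = h(z)`, and it travels from any `p ∈ (0, r/2)` to `r/2` in the finite time `∫ₚ^{r/2} 1/h`.
-/

open Filter Topology Set

theorem exists_monotone_hasDerivAt_leftInverse_of_le_deriv {F ψ : ℝ → ℝ} {m : ℝ} (hm : 0 < m)
    (hF : ∀ x, HasDerivAt F (ψ x) x) (hψ : ∀ x, m ≤ ψ x) :
    ∃ G : ℝ → ℝ, Monotone G ∧ (∀ x, G (F x) = x) ∧ ∀ t, HasDerivAt G (ψ (G t))⁻¹ t := by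
  have hmono : StrictMono F := strictMono_of_hasDerivAt_pos hF fun x => hm.trans_le (hψ x)
  have hFcont : Continuous F := continuous_iff_continuousAt.2 fun x => (hF x).continuousAt
  have hgrowth : ∀ x y, x ≤ y → m * (y - x) ≤ F y - F x := mul_sub_le_image_sub_of_le_deriv
    (fun x => (hF x).differentiableAt) fun x => (hF x).deriv ▸ hψ x
  have htop : Tendsto F atTop atTop := by
    refine tendsto_atTop_mono' atTop ?_
      (tendsto_atTop_add_const_left _ (F 0) (tendsto_id.const_mul_atTop hm))
    filter_upwards [eventually_ge_atTop 0] with x hx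
    change F 0 + m * x ≤ F x
    linarith [hgrowth 0 x hx]
  have hbot : Tendsto F atBot atBot := by
    refine tendsto_atBot_mono' atBot ?_
      (tendsto_atBot_add_const_left _ (F 0) (tendsto_id.const_mul_atBot hm))
    filter_upwards [eventually_le_atBot 0] with x hx
    change F x ≤ F 0 + m * x
    linarith [hgrowth x 0 hx]
  let e : ℝ ≃o ℝ := hmono.orderIsoOfSurjective F (hFcont.surjective htop hbot)
  refine ⟨e.symm, e.symm.monotone, e.symm_apply_apply, fun t => ?_⟩
  exact (hF _).of_local_left_inverse e.symm.continuous.continuousAt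
    (hm.trans_le (hψ _)).ne' (Eventually.of_forall e.apply_symm_apply)

theorem exists_hasDerivAt_of_pos_on_Icc {h : ℝ → ℝ} {p q : ℝ} (hpq : p < q)
    (hcont : ContinuousOn h (Icc p q)) (hpos : ∀ y ∈ Icc p q, 0 < h y) :
    ∃ z : ℝ → ℝ, ∃ T > 0, z 0 = p ∧ z T = q ∧ ∀ t ∈ Icc 0 T, HasDerivAt z (h (z t)) t := by
  -- `1 / h`, extended to be constant outside `[p, q]`
  set ψ : ℝ → ℝ := fun y => (h (projIcc p q hpq.le y))⁻¹
  have hψ : Continuous ψ :=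
    (hcont.comp_continuous continuous_projIcc.subtype_val fun y => (projIcc _ _ _ y).2).inv₀
      fun y => (hpos _ (projIcc _ _ _ y).2).ne'
  obtain ⟨y₀, -, hy₀⟩ := isCompact_Icc.exists_isMinOn (nonempty_Icc.2 hpq.le) hψ.continuousOn
  have hψ_ge : ∀ y, ψ y₀ ≤ ψ y := fun y => by
    simpa [ψ, projIcc_val] using hy₀ (projIcc p q hpq.le y).2
  obtain ⟨z, hzmono, hzF, hz⟩ := exists_monotone_hasDerivAt_leftInverse_of_le_deriv
    (inv_pos.2 (hpos _ (projIcc p q hpq.le y₀).2))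
    (fun u => (hψ.integral_hasStrictDerivAt p u).hasDerivAt) hψ_ge
  have hz0 : z 0 = p := by simpa using hzF p
  refine ⟨z, ∫ y in p..q, ψ y, hzmono.reflect_lt (by rwa [hzF, hz0]), hz0, hzF q, fun t ht => ?_⟩
  have hzt : z t ∈ Icc p q := ⟨hz0 ▸ hzmono ht.1, hzF q ▸ hzmono ht.2⟩
  simpa [ψ, projIcc_of_mem _ hzt] using hz t

theorem eventually_pos_nhdsGT_of_tendsto_sub_mul_abs_div_sq {h : ℝ → ℝ} {c : ℝ} (hc : 0 < c)
    (hasym : Tendsto (fun z : ℝ => (h z - c * |z| * z) / z ^ 2) (𝓝[≠] 0) (𝓝 0)) :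
    ∀ᶠ y in 𝓝[>] 0, 0 < h y := by
  have hlim : Tendsto (fun y => h y / y ^ 2) (𝓝[>] 0) (𝓝 c) := by
    have := (hasym.mono_left (nhdsGT_le_nhdsNE 0)).add_const c
    rw [zero_add] at this
    refine this.congr' ?_
    filter_upwards [self_mem_nhdsWithin] with y (hy : 0 < y)
    rw [abs_of_pos hy]
    field_simp
    ring
  filter_upwards [hlim.eventually_const_lt hc] with y hy
  by_contra! hle
  exact hy.not_ge (div_nonpos_of_nonpos_of_nonneg hle (sq_nonneg y))

theorem stmt_7_general (c : ℝ) (hc : 0 < c) (h : ℝ → ℝ) (hcont : Continuous h)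
    (hasym : Tendsto (fun z : ℝ => (h z - c * |z| * z) / z ^ 2) (𝓝[≠] 0) (𝓝 0)) :
    ∃ ε > 0, ∀ δ > 0, ∃ z : ℝ → ℝ, ∃ T : ℝ, 0 < T ∧ |z 0| < δ ∧
      (∀ t ∈ Set.Icc 0 T, HasDerivAt z (h (z t)) t) ∧ ε ≤ |z T| := by
  obtain ⟨r, hr : 0 < r, hpos⟩ := mem_nhdsGT_iff_exists_Ioo_subset.1
    (eventually_pos_nhdsGT_of_tendsto_sub_mul_abs_div_sq hc hasym)
  refine ⟨r / 2, half_pos hr, fun δ hδ => ?_⟩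
  have hp : 0 < min (δ / 2) (r / 4) := lt_min (half_pos hδ) (by positivity)
  have hpr : min (δ / 2) (r / 4) < r / 2 := (min_le_right _ _).trans_lt (by linarith)
  obtain ⟨z, T, hT, hz0, hzT, hz⟩ := exists_hasDerivAt_of_pos_on_Icc hpr hcont.continuousOn
    fun y hy => hpos ⟨hp.trans_le hy.1, hy.2.trans_lt (half_lt_self hr)⟩
  refine ⟨z, T, hT, ?_, hz, ?_⟩
  · rw [hz0, abs_of_pos hp]
    exact (min_le_left _ _).trans_lt (half_lt_self hδ)
  · rw [hzT, abs_of_pos (half_pos hr)]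

/-- If `h(z) = c|z|z + o(|z|²)` as `z → 0` with `c > 0`, then the zero solution of
`z' = h(z)` is unstable: some solution with arbitrarily small initial value leaves a fixed
neighborhood of `0` in finite time. -/
theorem stmt_7 (c : ℝ) (hc : 0 < c) (h : ℝ → ℝ) (hcont : Continuous h) (h0 : h 0 = 0)
    (hasym : Tendsto (fun z : ℝ => (h z - c * |z| * z) / z ^ 2) (𝓝[≠] 0) (𝓝 0)) :
    ∃ ε > 0, ∀ δ > 0, ∃ z : ℝ → ℝ, ∃ T : ℝ, 0 < T ∧ |z 0| < δ ∧
      (∀ t ∈ Set.Icc 0 T, HasDerivAt z (h (z t)) t) ∧ ε ≤ |z T| :=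
  stmt_7_general c hc h hcont hasym
end
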